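/- For every α > 0 there exists β > 0 such that for every integer N ≥ 1, every h > 0, and every function f : ZMod N → ℂ, the discrete gradient ∇_h f(j) = (f(j+1) − f(j−1))/(2h) and the discrete Laplacian Δ_h f(j) = (f(j+1) + f(j−1) − 2f(j))/h² satisfy the relative bound ‖∇_h f‖₂ ≤ α·‖Δ_h f‖₂ + β·‖f‖₂, where ‖g‖₂ = (Σ_{j ∈ ZMod N} |g(j)|²)^{1/2}. -/

import Mathlib

/-- The centered difference operator with step `h` on periodic sequences:
`∇_h f(j) = (f(j+1) - f(j-1))/(2h)`. -/
noncomputable def discGrad {N : ℕ} (h : ℝ) (f : ZMod N → ℂ) (j : ZMod N) : ℂ :=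
  (f (j + 1) - f (j - 1)) / (2 * h)

/-- The discrete Laplacian with step `h` on periodic sequences:
`Δ_h f(j) = (f(j+1) + f(j-1) - 2f(j))/h²`. -/
noncomputable def discLap {N : ℕ} (h : ℝ) (f : ZMod N → ℂ) (j : ZMod N) : ℂ :=
  (f (j + 1) + f (j - 1) - 2 * f j) / (h : ℂ) ^ 2

/-- The Euclidean (ℓ²) norm `‖g‖₂ = (Σ_j |g(j)|²)^{1/2}` on `ℂ^{ZMod N}`. -/
noncomputable def l2Norm {N : ℕ} [NeZero N] (g : ZMod N → ℂ) : ℝ :=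
  Real.sqrt (∑ j : ZMod N, ‖g j‖ ^ 2)


/-!
Let `T` be the cyclic shift on `ℓ²(ℤ/N)`, a unitary. Then `2h ∇_h = T - T⁻¹` and
`h² Δ_h = T + T⁻¹ - 2 = -(T - 1)* (T - 1)`, so summation by parts gives
`‖(T - 1) f‖² = -Re ⟪h² Δ_h f, f⟫ ≤ h² ‖Δ_h f‖ ‖f‖`, while `T - T⁻¹ = (1 + T⁻¹)(T - 1)` gives
`‖2h ∇_h f‖ ≤ 2 ‖(T - 1) f‖`. Together `‖∇_h f‖² ≤ ‖Δ_h f‖ ‖f‖`, with no dependence on `N` or `h`,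
and AM–GM turns this into the relative bound with `β = 1/(4α)`.
-/

open RCLike
open scoped InnerProductSpace

namespace LinearIsometryEquiv

variable {𝕜 E : Type*} [RCLike 𝕜] [SeminormedAddCommGroup E] [InnerProductSpace 𝕜 E]

theorem re_inner_add_symm_sub_two_smul_self (T : E ≃ₗᵢ[𝕜] E) (x : E) :
    re ⟪T x + T.symm x - (2 : 𝕜) • x, x⟫_𝕜 = -‖T x - x‖ ^ 2 := by
  have hsymm : ⟪T.symm x, x⟫_𝕜 = ⟪x, T x⟫_𝕜 := by
    rw [← T.inner_map_map, T.apply_symm_apply]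
  rw [inner_sub_left, inner_add_left, inner_smul_left, inner_self_eq_norm_sq_to_K, hsymm,
    map_ofNat, AddMonoidHom.map_sub, AddMonoidHom.map_add, ofNat_mul_re, ← ofReal_pow,
    ofReal_re, inner_re_symm x, norm_sub_sq (𝕜 := 𝕜), T.norm_map]
  ring

theorem norm_sub_symm_le (T : E ≃ₗᵢ[𝕜] E) (x : E) : ‖T x - T.symm x‖ ≤ 2 * ‖T x - x‖ :=
  calc ‖T x - T.symm x‖ = ‖(T x - x) + T.symm (T x - x)‖ := by
        rw [map_sub, T.symm_apply_apply]; abel_nf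
    _ ≤ ‖T x - x‖ + ‖T.symm (T x - x)‖ := norm_add_le _ _
    _ = 2 * ‖T x - x‖ := by rw [T.symm.norm_map]; ring

theorem norm_sub_symm_sq_le (T : E ≃ₗᵢ[𝕜] E) (x : E) :
    ‖T x - T.symm x‖ ^ 2 ≤ 4 * (‖T x + T.symm x - (2 : 𝕜) • x‖ * ‖x‖) := by
  have hdiff : ‖T x - x‖ ^ 2 ≤ ‖T x + T.symm x - (2 : 𝕜) • x‖ * ‖x‖ := by
    have := re_inner_le_norm (𝕜 := 𝕜) (-(T x + T.symm x - (2 : 𝕜) • x)) x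
    rwa [inner_neg_left, map_neg, re_inner_add_symm_sub_two_smul_self, neg_neg, norm_neg] at this
  calc ‖T x - T.symm x‖ ^ 2 ≤ (2 * ‖T x - x‖) ^ 2 := by gcongr; exact T.norm_sub_symm_le x
    _ = 4 * ‖T x - x‖ ^ 2 := by ring
    _ ≤ 4 * (‖T x + T.symm x - (2 : 𝕜) • x‖ * ‖x‖) := by gcongr

end LinearIsometryEquiv

theorem Real.sqrt_mul_le_mul_add_inv_mul {a x y : ℝ} (ha : 0 < a) (hx : 0 ≤ x) (hy : 0 ≤ y) :
    √(x * y) ≤ a * x + (4 * a)⁻¹ * y := by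
  rw [Real.sqrt_le_left (by positivity)]
  have hab : 4 * a * (4 * a)⁻¹ = 1 := mul_inv_cancel₀ (by positivity)
  nlinarith [sq_nonneg (a * x - (4 * a)⁻¹ * y)]

noncomputable def cyclicShift (N : ℕ) [NeZero N] :
    EuclideanSpace ℂ (ZMod N) ≃ₗᵢ[ℂ] EuclideanSpace ℂ (ZMod N) :=
  LinearIsometryEquiv.piLpCongrLeft 2 ℂ ℂ (Equiv.addRight (1 : ZMod N)).symm

section Torus

variable {N : ℕ} [NeZero N]

@[simp]
theorem cyclicShift_apply (x : EuclideanSpace ℂ (ZMod N)) (j : ZMod N) :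
    cyclicShift N x j = x (j + 1) := by
  simp [cyclicShift, LinearIsometryEquiv.piLpCongrLeft_apply, Equiv.piCongrLeft'_apply]

@[simp]
theorem cyclicShift_symm_apply (x : EuclideanSpace ℂ (ZMod N)) (j : ZMod N) :
    (cyclicShift N).symm x j = x (j - 1) := by
  rw [← (cyclicShift N).apply_symm_apply x, cyclicShift_apply, sub_add_cancel,
    LinearIsometryEquiv.symm_apply_apply]

theorem l2Norm_eq_norm (g : ZMod N → ℂ) :
    l2Norm g = ‖(WithLp.toLp 2 g : EuclideanSpace ℂ (ZMod N))‖ := by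
  rw [l2Norm, EuclideanSpace.norm_eq]

theorem toLp_discGrad (h : ℝ) (f : ZMod N → ℂ) :
    (WithLp.toLp 2 (discGrad h f) : EuclideanSpace ℂ (ZMod N)) =
      (2 * (h : ℂ))⁻¹ •
        (cyclicShift N (WithLp.toLp 2 f) - (cyclicShift N).symm (WithLp.toLp 2 f)) := by
  ext j
  simp [discGrad, div_eq_inv_mul]

theorem toLp_discLap (h : ℝ) (f : ZMod N → ℂ) :
    (WithLp.toLp 2 (discLap h f) : EuclideanSpace ℂ (ZMod N)) =
      ((h : ℂ) ^ 2)⁻¹ • (cyclicShift N (WithLp.toLp 2 f) + (cyclicShift N).symm (WithLp.toLp 2 f)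
        - (2 : ℂ) • WithLp.toLp 2 f) := by
  ext j
  simp [discLap, div_eq_inv_mul]

theorem l2Norm_discGrad_sq_le (h : ℝ) (f : ZMod N → ℂ) :
    l2Norm (discGrad h f) ^ 2 ≤ l2Norm (discLap h f) * l2Norm f := by
  have hscale : ‖(2 * (h : ℂ))⁻¹‖ ^ 2 * 4 = ‖((h : ℂ) ^ 2)⁻¹‖ := by
    simp only [norm_inv, norm_mul, norm_pow, Complex.norm_ofNat, Complex.norm_real,
      Real.norm_eq_abs, inv_pow, mul_pow, sq_abs]
    ring
  rw [l2Norm_eq_norm, l2Norm_eq_norm, l2Norm_eq_norm, toLp_discGrad, toLp_discLap, norm_smul,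
    norm_smul, mul_pow, ← hscale, mul_assoc, mul_assoc]
  gcongr
  exact (cyclicShift N).norm_sub_symm_sq_le _

end Torus

/-- Kato–Rellich relative bound of the discrete gradient with respect to
the discrete Laplacian: for every `α > 0` there is `β > 0`, uniform in `N` and `h`, with
`‖∇_h f‖₂ ≤ α·‖Δ_h f‖₂ + β·‖f‖₂`. -/
theorem thm_kato_rellich (α : ℝ) (hα : 0 < α) :
    ∃ β > 0, ∀ (N : ℕ) (hN : 1 ≤ N) (h : ℝ), 0 < h → ∀ f : ZMod N → ℂ,
      haveI : NeZero N := ⟨Nat.one_le_iff_ne_zero.mp hN⟩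
      l2Norm (discGrad h f) ≤ α * l2Norm (discLap h f) + β * l2Norm f := by
  refine ⟨(4 * α)⁻¹, by positivity, fun N hN h _ f => ?_⟩
  have : NeZero N := ⟨Nat.one_le_iff_ne_zero.mp hN⟩
  calc l2Norm (discGrad h f) ≤ √(l2Norm (discLap h f) * l2Norm f) :=
        Real.le_sqrt_of_sq_le (l2Norm_discGrad_sq_le h f)
    _ ≤ α * l2Norm (discLap h f) + (4 * α)⁻¹ * l2Norm f :=
        Real.sqrt_mul_le_mul_add_inv_mul hα (Real.sqrt_nonneg _) (Real.sqrt_nonneg _)
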